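/- Let p ∈ ℕ with p ≥ 1 and set B_F = 2^p − 2^{−p}. Then round_p(exp(B_F)) = B_F and round_p(exp(−B_F)) = 0. -/

import Mathlib

/-! Since `exp B_F > B_F` and `B_F` is the largest element of `F_p`, it is the nearest one.
Nonzero elements of `F_p` have absolute value at least `2^{-p}`, while
`exp (-B_F) < 2^{-(p+1)}`, because `B_F > 2^p log 2 ≥ (p + 1) log 2`; so `0` is strictly nearest. -/

/-- The set of fixed-point numbers of precision `p`:
`F_p = { s·a·2^{-p} : s ∈ {1,-1}, a ∈ ℕ, a ≤ 2^{2p} - 1 }`. -/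
def Fp (p : ℕ) : Set ℝ :=
  {x | ∃ (s : ℝ) (a : ℕ), (s = 1 ∨ s = -1) ∧ a ≤ 2 ^ (2 * p) - 1 ∧
    x = s * a * (2 : ℝ) ^ (-(p : ℤ))}

/-- The maximal fixed-point number `B_F = 2^p - 2^{-p}`. -/
noncomputable def BF (p : ℕ) : ℝ := 2 ^ p - (2 : ℝ) ^ (-(p : ℤ))

/-- `r` is the rounding of `x` to precision `p`: `r ∈ F_p` is closest to `x` among elements
of `F_p`, with ties broken in favor of the element of smaller absolute value. -/
def IsRound (p : ℕ) (x r : ℝ) : Prop :=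
  r ∈ Fp p ∧ ∀ y ∈ Fp p, |x - r| < |x - y| ∨ (|x - r| = |x - y| ∧ |r| ≤ |y|)

open Real

lemma BF_eq_cast_mul (p : ℕ) : BF p = ((2 ^ (2 * p) - 1 : ℕ) : ℝ) * (2 : ℝ) ^ (-(p : ℤ)) := by
  rw [Nat.cast_sub Nat.one_le_two_pow, BF, zpow_neg, zpow_natCast]
  push_cast
  field_simp
  ring

lemma exists_abs_eq_of_mem_Fp {p : ℕ} {y : ℝ} (hy : y ∈ Fp p) :
    ∃ a : ℕ, a ≤ 2 ^ (2 * p) - 1 ∧ |y| = a * (2 : ℝ) ^ (-(p : ℤ)) := by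
  obtain ⟨s, a, hs, ha, rfl⟩ := hy
  refine ⟨a, ha, ?_⟩
  rcases hs with rfl | rfl <;> simp [abs_mul]

lemma BF_mem_Fp (p : ℕ) : BF p ∈ Fp p :=
  ⟨1, 2 ^ (2 * p) - 1, Or.inl rfl, le_rfl, by rw [one_mul, BF_eq_cast_mul]⟩

lemma zero_mem_Fp (p : ℕ) : (0 : ℝ) ∈ Fp p :=
  ⟨1, 0, Or.inl rfl, Nat.zero_le _, by simp⟩

lemma abs_le_BF_of_mem_Fp {p : ℕ} {y : ℝ} (hy : y ∈ Fp p) : |y| ≤ BF p := by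
  obtain ⟨a, ha, hya⟩ := exists_abs_eq_of_mem_Fp hy
  rw [hya, BF_eq_cast_mul]
  gcongr

lemma zpow_neg_le_abs_of_mem_Fp {p : ℕ} {y : ℝ} (hy : y ∈ Fp p) (hy0 : y ≠ 0) :
    (2 : ℝ) ^ (-(p : ℤ)) ≤ |y| := by
  obtain ⟨a, -, hya⟩ := exists_abs_eq_of_mem_Fp hy
  have ha : a ≠ 0 := by
    rintro rfl
    simp_all
  rw [hya]
  exact le_mul_of_one_le_left (by positivity) (Nat.one_le_cast.2 (Nat.one_le_iff_ne_zero.2 ha))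

lemma IsRound.eq_BF_of_BF_le {p : ℕ} {x r : ℝ} (h : IsRound p x r) (hx : BF p ≤ x) :
    r = BF p := by
  have hr : r ≤ BF p := (abs_le.1 (abs_le_BF_of_mem_Fp h.1)).2
  rcases h.2 (BF p) (BF_mem_Fp p) with hlt | ⟨heq, -⟩ <;>
    rw [abs_of_nonneg (by linarith), abs_of_nonneg (sub_nonneg.2 hx)] at * <;> linarith

lemma IsRound.eq_zero_of_abs_lt {p : ℕ} {x r : ℝ} (h : IsRound p x r)
    (hx : |x| < (2 : ℝ) ^ (-(p : ℤ)) / 2) : r = 0 := by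
  by_contra hr0
  have hr : (2 : ℝ) ^ (-(p : ℤ)) ≤ |r| := zpow_neg_le_abs_of_mem_Fp h.1 hr0
  have hdist : |x| < |x - r| := by
    linarith [abs_sub_abs_le_abs_sub r x, abs_sub_comm x r]
  rcases h.2 0 (zero_mem_Fp p) with hlt | ⟨heq, -⟩ <;> simp only [sub_zero] at * <;> linarith

lemma two_pow_succ_lt_exp_BF {p : ℕ} (hp : 1 ≤ p) : (2 : ℝ) ^ (p + 1) < exp (BF p) := by
  have h2p : (2 : ℝ) ≤ 2 ^ p := by simpa using pow_le_pow_right₀ (by norm_num : (1 : ℝ) ≤ 2) hp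
  have hulp : (2 : ℝ) ^ (-(p : ℤ)) ≤ 1 / 2 := by
    rw [zpow_neg, zpow_natCast, one_div]
    exact inv_anti₀ (by norm_num) h2p
  have hsucc : ((p + 1 : ℕ) : ℝ) ≤ 2 ^ p := by exact_mod_cast Nat.lt_two_pow_self
  calc (2 : ℝ) ^ (p + 1) = exp ((p + 1 : ℕ) * log 2) := by
        rw [← log_pow, exp_log (by positivity)]
    _ ≤ exp (2 ^ p * log 2) := by gcongr
    _ < exp (BF p) := by
        rw [BF]
        gcongr
        nlinarith [log_two_lt_d9]

lemma exp_neg_BF_lt {p : ℕ} (hp : 1 ≤ p) : exp (-BF p) < (2 : ℝ) ^ (-(p : ℤ)) / 2 := by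
  rw [exp_neg, zpow_neg, zpow_natCast, div_eq_mul_inv, ← mul_inv, ← pow_succ]
  exact inv_strictAnti₀ (by positivity) (two_pow_succ_lt_exp_BF hp)

/-- `round_p (exp B_F) = B_F` and `round_p (exp (-B_F)) = 0`. -/
theorem round_exp_BF (p : ℕ) (hp : 1 ≤ p) :
    (∀ r : ℝ, IsRound p (Real.exp (BF p)) r → r = BF p) ∧
    (∀ r : ℝ, IsRound p (Real.exp (-(BF p))) r → r = 0) := by
  refine ⟨fun r hr => hr.eq_BF_of_BF_le ?_, fun r hr => hr.eq_zero_of_abs_lt ?_⟩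
  · linarith [add_one_le_exp (BF p)]
  · rw [abs_of_pos (exp_pos _)]
    exact exp_neg_BF_lt hp
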